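/- arXiv:2101.05222 — 3 statements merged into one kernel-verified Lean document; each statement's English description precedes it below -/
import Mathlib

section
/- (Key renewal theorem, arithmetic case.) Let (p_j)_{j≥0} be a probability mass function on the nonneganive integers with p₀ = 0 and gcd{j : p_j > 0} = 1, and let u_m := Σ_{k≥0} p^{*k}(m), where p^{*k}(m) = P(T₁ + ⋯ + T_k = m) for i.i.d. random variables T_j with mass function p. If (b_n)_{n≥0} is a summable sequence of non-negative reals, then the sequence a_n := Σ_{m=0}^{n} b_{n−m} u_m satisfies lim_{n→∞} a_n = (Σ_{m≥0} b_m) / (Σ_{j≥0} j p_j), where the limit is interpreted as 0 when Σ_{j≥0} j p_j = ∞. -/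
/-!
The renewal sequence solves `u = δ₀ + p * u`. Along a subsequence realising `limsup u` (or
`liminf u`), compactness lets all backward shifts `u (n - m)` converge, to a `p`-harmonic `w`
(`w m = ∑ⱼ p j * w (m + j)`) attaining its extremum at `0`. By the maximum principle `w` is constant
on the monoid generated by the support of `p`, which contains every large integer because the gcd
is `1`. Passing to the limit in `∑_{k ≤ n} P(T > k) * u (n - k) = 1`, whose weights sum to the mean
`∑ₖ P(T > k) = ∑ⱼ j * p j`, gives `limsup u = liminf u = 1 / mean` (`0` for infinite mean). The key
renewal theorem then follows by dominated convergence.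
-/

open Filter Finset
open scoped ENNReal Topology

noncomputable section

/-- Convolution of two sequences on ℕ. -/
def seqConv (p q : ℕ → ℝ) (m : ℕ) : ℝ := ∑ j ∈ Finset.range (m + 1), p j * q (m - j)

/-- `convPow p k` is the `k`-fold convolution power `p^{*k}` of `p`
(with `p^{*0} = δ₀`); `p^{*k}(m)` is the probability that a sum of `k` i.i.d.
`p`-distributed random variables equals `m`. -/
def convPow (p : ℕ → ℝ) : ℕ → ℕ → ℝ
  | 0, m => if m = 0 then 1 else 0
  | (k + 1), m => seqConv p (convPow p k) m

theorem tendsto_sum_range_mul {ι : Type*} {l : Filter ι} {f : ℕ → ℝ} (hf : Summable f)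
    {N : ι → ℕ} (hN : Tendsto N l atTop) {v : ι → ℕ → ℝ} {C : ℝ} (hv : ∀ i j, |v i j| ≤ C)
    {c : ℕ → ℝ} (hc : ∀ j, Tendsto (fun i => v i j) l (𝓝 (c j))) :
    Tendsto (fun i => ∑ j ∈ range (N i + 1), f j * v i j) l (𝓝 (∑' j, f j * c j)) := by
  set F : ι → ℕ → ℝ := fun i j => if j ≤ N i then f j * v i j else 0
  have hF : ∀ i, ∑ j ∈ range (N i + 1), f j * v i j = ∑' j, F i j := fun i => by
    rw [tsum_eq_sum (f := F i) (s := range (N i + 1)) fun j hj =>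
      if_neg (by simpa [Nat.lt_succ_iff] using hj)]
    exact sum_congr rfl fun j hj => (if_pos (Nat.lt_succ_iff.mp (mem_range.mp hj))).symm
  simp_rw [hF]
  refine tendsto_tsum_of_dominated_convergence ((summable_abs_iff.mpr hf).mul_right C)
    (fun j => (hc j).const_mul (f j) |>.congr' ?_) (Eventually.of_forall fun i j => ?_)
  · filter_upwards [hN.eventually_ge_atTop j] with i hi using (if_pos hi).symm
  · by_cases hj : j ≤ N i
    · simpa [F, hj, abs_mul] using mul_le_mul_of_nonneg_left (hv i j) (abs_nonneg (f j))
    · simpa [F, hj] using mul_nonneg (abs_nonneg (f j)) ((abs_nonneg _).trans (hv i j))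

structure IsRenewalSeq (p u : ℕ → ℝ) : Prop where
  zero : u 0 = 1
  eq_sum : ∀ n, 0 < n → u n = ∑ j ∈ range (n + 1), p j * u (n - j)

section ConvPow

variable {p : ℕ → ℝ}

theorem convPow_succ (k m : ℕ) :
    convPow p (k + 1) m = ∑ j ∈ range (m + 1), p j * convPow p k (m - j) := rfl

theorem convPow_eq_zero_of_lt (hp0 : p 0 = 0) {k m : ℕ} (h : m < k) : convPow p k m = 0 := by
  induction k generalizing m with
  | zero => omega
  | succ k ih =>
    rw [convPow_succ]
    refine sum_eq_zero fun j hj => ?_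
    rcases Nat.eq_zero_or_pos j with rfl | hj0
    · rw [hp0, zero_mul]
    · rw [ih (by have := mem_range.mp hj; omega), mul_zero]

theorem tsum_convPow_eq_sum (hp0 : p 0 = 0) {m K : ℕ} (h : m < K) :
    ∑' k, convPow p k m = ∑ k ∈ range K, convPow p k m :=
  tsum_eq_sum fun k hk => convPow_eq_zero_of_lt hp0 (by simp at hk; omega)

theorem isRenewalSeq_tsum_convPow (hp0 : p 0 = 0) :
    IsRenewalSeq p fun m => ∑' k, convPow p k m where
  zero := by simp [tsum_convPow_eq_sum hp0 zero_lt_one, convPow]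
  eq_sum n hn := by
    -- summing `k` up to `n + 1` keeps every `n - j < n + 1`, so `j = 0` needs no special case
    have hconv0 : convPow p 0 n = 0 := if_neg hn.ne'
    rw [tsum_convPow_eq_sum hp0 (by omega : n < n + 2), sum_range_succ', hconv0, add_zero]
    simp_rw [convPow_succ]
    rw [sum_comm]
    refine sum_congr rfl fun j _ => ?_
    rw [tsum_convPow_eq_sum hp0 (by omega : n - j < n + 1), mul_sum]

end ConvPow

section Renewal

variable {p u : ℕ → ℝ}

-- `tailMass p k = P(T > k)` for `T` distributed according to `p`
def tailMass (p : ℕ → ℝ) (k : ℕ) : ℝ := 1 - ∑ j ∈ range (k + 1), p j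

theorem tailMass_zero (hp0 : p 0 = 0) : tailMass p 0 = 1 := by
  simp [tailMass, hp0]

theorem tailMass_succ (k : ℕ) : tailMass p (k + 1) = tailMass p k - p (k + 1) := by
  rw [tailMass, tailMass, sum_range_succ _ (k + 1)]
  ring

theorem hasSum_tailMass (hpsum : HasSum p 1) (k : ℕ) :
    HasSum (fun j => if k < j then p j else 0) (tailMass p k) := by
  have hfirst : ∑ j ∈ range (k + 1), (if k < j then p j else 0) = 0 :=
    sum_eq_zero fun j hj => if_neg (by have := mem_range.mp hj; omega)
  rw [← hasSum_nat_add_iff' (k + 1), hfirst, sub_zero]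
  convert (hasSum_nat_add_iff' (k + 1)).mpr hpsum using 2 with n
  · exact if_pos (by omega)
  · rfl

theorem tailMass_nonneg (hpnn : ∀ j, 0 ≤ p j) (hpsum : HasSum p 1) (k : ℕ) :
    0 ≤ tailMass p k :=
  (hasSum_tailMass hpsum k).nonneg fun j => by split_ifs <;> simp [hpnn j]

theorem tsum_ofReal_tailMass (hpnn : ∀ j, 0 ≤ p j) (hpsum : HasSum p 1) :
    ∑' k, ENNReal.ofReal (tailMass p k) = ∑' j : ℕ, (j : ℝ≥0∞) * ENNReal.ofReal (p j) := by
  have hterm : ∀ k, ENNReal.ofReal (tailMass p k) =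
      ∑' j, if k < j then ENNReal.ofReal (p j) else 0 := fun k => by
    rw [← (hasSum_tailMass hpsum k).tsum_eq, ENNReal.ofReal_tsum_of_nonneg
      (fun j => by split_ifs <;> simp [hpnn j]) (hasSum_tailMass hpsum k).summable]
    exact tsum_congr fun j => by split_ifs <;> simp
  have hcount : ∀ j : ℕ, ∑' k, (if k < j then ENNReal.ofReal (p j) else 0) =
      j * ENNReal.ofReal (p j) := fun j => by
    rw [tsum_eq_sum (s := range j) fun k hk => if_neg (by simpa using hk),
      sum_ite_of_true fun k hk => mem_range.mp hk, sum_const, card_range, nsmul_eq_mul]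
  simp_rw [hterm]
  rw [ENNReal.tsum_comm]
  exact tsum_congr hcount

namespace IsRenewalSeq

theorem nonneg (hu : IsRenewalSeq p u) (hpnn : ∀ j, 0 ≤ p j) (hp0 : p 0 = 0) (n : ℕ) :
    0 ≤ u n := by
  induction n using Nat.strong_induction_on with
  | _ n ih =>
    rcases Nat.eq_zero_or_pos n with rfl | hn
    · simp [hu.zero]
    rw [hu.eq_sum n hn]
    refine sum_nonneg fun j hj => ?_
    rcases Nat.eq_zero_or_pos j with rfl | hj0
    · simp [hp0]
    · exact mul_nonneg (hpnn j) (ih _ (by omega))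

-- the last renewal epoch `n - k ≤ n` is followed by a gap longer than `k`
theorem sum_tailMass_mul (hu : IsRenewalSeq p u) (hp0 : p 0 = 0) (n : ℕ) :
    ∑ k ∈ range (n + 1), tailMass p k * u (n - k) = 1 := by
  induction n with
  | zero => simp [tailMass_zero hp0, hu.zero]
  | succ n ih =>
    have hren := hu.eq_sum (n + 1) n.succ_pos
    rw [sum_range_succ', hp0, zero_mul, add_zero] at hren
    simp only [Nat.add_sub_add_right] at hren
    rw [sum_range_succ', tailMass_zero hp0, one_mul, Nat.sub_zero]
    simp only [tailMass_succ, Nat.add_sub_add_right, sub_mul, sum_sub_distrib, ih, ← hren]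
    ring

theorem le_one (hu : IsRenewalSeq p u) (hpnn : ∀ j, 0 ≤ p j) (hp0 : p 0 = 0)
    (hpsum : HasSum p 1) (n : ℕ) : u n ≤ 1 := by
  calc u n = tailMass p 0 * u (n - 0) := by rw [tailMass_zero hp0, one_mul, Nat.sub_zero]
    _ ≤ ∑ k ∈ range (n + 1), tailMass p k * u (n - k) :=
      single_le_sum (fun k _ => mul_nonneg (tailMass_nonneg hpnn hpsum k) (hu.nonneg hpnn hp0 _))
        (mem_range.mpr n.succ_pos)
    _ = 1 := hu.sum_tailMass_mul hp0 n

theorem abs_le_one (hu : IsRenewalSeq p u) (hpnn : ∀ j, 0 ≤ p j)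
    (hp0 : p 0 = 0) (hpsum : HasSum p 1) (n : ℕ) : |u n| ≤ 1 :=
  abs_le.mpr ⟨by linarith [hu.nonneg hpnn hp0 n], hu.le_one hpnn hp0 hpsum n⟩

end IsRenewalSeq

end Renewal

def IsHarmonic (p w : ℕ → ℝ) : Prop := ∀ m, HasSum (fun j => p j * w (m + j)) (w m)

namespace IsHarmonic

variable {p w : ℕ → ℝ}

theorem neg (hw : IsHarmonic p w) : IsHarmonic p (-w) := fun m => by
  simpa [mul_neg] using (hw m).neg

theorem eq_add_of_le (hw : IsHarmonic p w) (hpnn : ∀ j, 0 ≤ p j) (hpsum : HasSum p 1)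
    {c : ℝ} (hle : ∀ n, w n ≤ c) {m i : ℕ} (hm : w m = c) (hi : 0 < p i) : w (m + i) = c := by
  have hdefect : HasSum (fun j => p j * (c - w (m + j))) 0 := by
    simpa [mul_sub, hm] using (hpsum.mul_right c).sub (hw m)
  have hzero := congrFun ((hasSum_zero_iff_of_nonneg fun j =>
    mul_nonneg (hpnn j) (sub_nonneg.mpr (hle _))).mp hdefect) i
  have := (mul_eq_zero.mp hzero).resolve_left hi.ne'
  linarith

theorem eq_of_mem_closure (hw : IsHarmonic p w) (hpnn : ∀ j, 0 ≤ p j) (hpsum : HasSum p 1)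
    {c : ℝ} (hle : ∀ n, w n ≤ c) (h0 : w 0 = c) {m : ℕ}
    (hm : m ∈ AddSubmonoid.closure {j | 0 < p j}) : w m = c := by
  induction hm using AddSubmonoid.closure_induction_left with
  | zero => exact h0
  | add_left i hi m _ ih => rw [add_comm]; exact hw.eq_add_of_le hpnn hpsum hle ih hi

end IsHarmonic

theorem exists_tendsto_shift {u : ℕ → ℝ} {s : Set ℝ} (hs : IsCompact s) (hus : ∀ n, u n ∈ s)
    {c : ℝ} (hc : MapClusterPt c atTop u) :
    ∃ φ : ℕ → ℕ, Tendsto φ atTop atTop ∧ ∃ w : ℕ → ℝ, w 0 = c ∧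
      ∀ m, Tendsto (fun k => u (φ k - m)) atTop (𝓝 (w m)) := by
  obtain ⟨ψ, hψ, hψc⟩ := hc.tendsto_subseq
  obtain ⟨w, -, χ, hχ, hw⟩ := (isCompact_univ_pi fun _ : ℕ => hs).tendsto_subseq
    (x := fun k m => u (ψ k - m)) fun k => Set.mem_univ_pi.mpr fun m => hus _
  rw [tendsto_pi_nhds] at hw
  refine ⟨ψ ∘ χ, (hψ.comp hχ).tendsto_atTop, w, ?_, hw⟩
  exact tendsto_nhds_unique (by simpa [Function.comp_def] using hw 0) (hψc.comp hχ.tendsto_atTop)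

namespace IsRenewalSeq

variable {p u : ℕ → ℝ}

theorem isHarmonic_of_tendsto (hu : IsRenewalSeq p u) (hp : Summable p) {C : ℝ}
    (hC : ∀ n, |u n| ≤ C) {φ : ℕ → ℕ} (hφ : Tendsto φ atTop atTop) {w : ℕ → ℝ}
    (hw : ∀ m, Tendsto (fun k => u (φ k - m)) atTop (𝓝 (w m))) : IsHarmonic p w := by
  intro m
  have hN : Tendsto (fun k => φ k - m) atTop atTop := (tendsto_sub_atTop_nat m).comp hφ
  have hlim := tendsto_sum_range_mul hp hN (v := fun k j => u (φ k - m - j))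
    (fun _ _ => hC _) (c := fun j => w (m + j)) fun j => by simpa [Nat.sub_sub] using hw (m + j)
  have heq : w m = ∑' j, p j * w (m + j) := tendsto_nhds_unique (hw m) <| hlim.congr' <| by
    filter_upwards [hN.eventually_ge_atTop 1] with k hk using (hu.eq_sum _ hk).symm
  have hwC : ∀ n, |w n| ≤ C := fun n => le_of_tendsto' (hw n).abs fun k => hC _
  rw [heq]
  refine (Summable.of_norm_bounded ((summable_abs_iff.mpr hp).mul_right C) fun j => ?_).hasSum
  rw [Real.norm_eq_abs, abs_mul]
  exact mul_le_mul_of_nonneg_left (hwC _) (abs_nonneg _)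

theorem exists_tendsto_shift_of_isExtreme (hu : IsRenewalSeq p u) (hpnn : ∀ j, 0 ≤ p j)
    (hp0 : p 0 = 0) (hpsum : HasSum p 1)
    (hgcd : ∀ c : ℕ, (∀ j : ℕ, 0 < p j → c ∣ j) → c = 1) {c : ℝ}
    (hc : IsGreatest {x | MapClusterPt x atTop u} c ∨ IsLeast {x | MapClusterPt x atTop u} c) :
    ∃ N : ℕ → ℕ, Tendsto N atTop atTop ∧ ∀ k, Tendsto (fun j => u (N j - k)) atTop (𝓝 c) := by
  obtain ⟨φ, hφ, w, hw0, hw⟩ := exists_tendsto_shift isCompact_Icc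
    (fun n => ⟨hu.nonneg hpnn hp0 n, hu.le_one hpnn hp0 hpsum n⟩) (hc.elim (·.1) (·.1))
  have hharm := hu.isHarmonic_of_tendsto hpsum.summable (hu.abs_le_one hpnn hp0 hpsum) hφ hw
  have hcluster (m : ℕ) : MapClusterPt (w m) atTop u :=
    ((hw m).mapClusterPt).of_comp ((tendsto_sub_atTop_nat m).comp hφ)
  have hconst (m : ℕ) (hm : m ∈ AddSubmonoid.closure {j | 0 < p j}) : w m = c := by
    rcases hc with hc | hc
    · exact hharm.eq_of_mem_closure hpnn hpsum (fun n => hc.2 (hcluster n)) hw0 hm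
    · simpa using hharm.neg.eq_of_mem_closure hpnn hpsum
        (fun n => neg_le_neg (hc.2 (hcluster n))) (by simp [hw0]) hm
  have hgcd1 : Nat.setGcd {j | 0 < p j} = 1 := hgcd _ fun j hj => Nat.setGcd_dvd_of_mem hj
  obtain ⟨N₀, hN₀⟩ := Nat.exists_mem_closure_of_ge {j | 0 < p j}
  refine ⟨fun j => φ j - N₀, (tendsto_sub_atTop_nat N₀).comp hφ, fun k => ?_⟩
  have hlim := hw (N₀ + k)
  rw [hconst _ (hN₀ _ (Nat.le_add_right _ _) (by simp [hgcd1]))] at hlim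
  simpa [Nat.sub_sub] using hlim

theorem mul_sum_tailMass_le_one (hu : IsRenewalSeq p u) (hpnn : ∀ j, 0 ≤ p j) (hp0 : p 0 = 0)
    (hpsum : HasSum p 1) {N : ℕ → ℕ} (hN : Tendsto N atTop atTop) {c : ℝ}
    (hc : ∀ k, Tendsto (fun j => u (N j - k)) atTop (𝓝 c)) (M : ℕ) :
    c * ∑ k ∈ range M, tailMass p k ≤ 1 := by
  rw [mul_comm, sum_mul]
  refine le_of_tendsto (tendsto_finsetSum _ fun k _ => (hc k).const_mul (tailMass p k)) ?_
  filter_upwards [hN.eventually_ge_atTop M] with j hj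
  calc ∑ k ∈ range M, tailMass p k * u (N j - k)
      ≤ ∑ k ∈ range (N j + 1), tailMass p k * u (N j - k) :=
        sum_le_sum_of_subset_of_nonneg (range_subset_range.mpr (by omega)) fun k _ _ =>
          mul_nonneg (tailMass_nonneg hpnn hpsum k) (hu.nonneg hpnn hp0 _)
    _ = 1 := hu.sum_tailMass_mul hp0 (N j)

theorem mul_tsum_tailMass_eq_one (hu : IsRenewalSeq p u) (hpnn : ∀ j, 0 ≤ p j)
    (hp0 : p 0 = 0) (hpsum : HasSum p 1) (hsum : Summable (tailMass p)) {N : ℕ → ℕ}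
    (hN : Tendsto N atTop atTop) {c : ℝ} (hc : ∀ k, Tendsto (fun j => u (N j - k)) atTop (𝓝 c)) :
    c * ∑' k, tailMass p k = 1 := by
  have hlim := tendsto_sum_range_mul hsum hN (v := fun j k => u (N j - k))
    (fun _ _ => hu.abs_le_one hpnn hp0 hpsum _) hc
  simp_rw [hu.sum_tailMass_mul hp0, tsum_mul_right] at hlim
  rw [mul_comm]
  exact tendsto_nhds_unique hlim tendsto_const_nhds

-- The renewal theorem of Erdős, Feller and Pollard.
theorem tendsto (hu : IsRenewalSeq p u) (hpnn : ∀ j, 0 ≤ p j) (hp0 : p 0 = 0)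
    (hpsum : HasSum p 1) (hgcd : ∀ c : ℕ, (∀ j : ℕ, 0 < p j → c ∣ j) → c = 1) :
    Tendsto u atTop
      (𝓝 (1 / (∑' j : ℕ, (j : ℝ≥0∞) * ENNReal.ofReal (p j)).toReal)) := by
  have hbdd : IsBoundedUnder (· ≤ ·) atTop u := isBoundedUnder_of ⟨1, hu.le_one hpnn hp0 hpsum⟩
  have hbdd' : IsBoundedUnder (· ≥ ·) atTop u := isBoundedUnder_of ⟨0, hu.nonneg hpnn hp0⟩
  obtain ⟨N, hN, hNlim⟩ := hu.exists_tendsto_shift_of_isExtreme hpnn hp0 hpsum hgcd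
    (.inl (isGreatest_mapClusterPt_limsup hbdd'.isCoboundedUnder_le hbdd))
  obtain ⟨N', hN', hN'lim⟩ := hu.exists_tendsto_shift_of_isExtreme hpnn hp0 hpsum hgcd
    (.inr (isLeast_mapClusterPt_liminf hbdd.isCoboundedUnder_ge hbdd'))
  have htail0 := tailMass_nonneg hpnn hpsum
  rw [← tsum_ofReal_tailMass hpnn hpsum]
  by_cases hsum : Summable (tailMass p)
  · rw [← ENNReal.ofReal_tsum_of_nonneg htail0 hsum, ENNReal.toReal_ofReal (tsum_nonneg htail0)]
    exact tendsto_of_liminf_eq_limsup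
      (eq_one_div_of_mul_eq_one_left (hu.mul_tsum_tailMass_eq_one hpnn hp0 hpsum hsum hN' hN'lim))
      (eq_one_div_of_mul_eq_one_left (hu.mul_tsum_tailMass_eq_one hpnn hp0 hpsum hsum hN hNlim))
      hbdd hbdd'
  · have hinfty : ∑' k, ENNReal.ofReal (tailMass p k) = ⊤ := by
      by_contra hne
      exact hsum <| (ENNReal.summable_toReal hne).congr fun k => ENNReal.toReal_ofReal (htail0 k)
    have hliminf : 0 ≤ liminf u atTop :=
      le_liminf_of_le hbdd.isCoboundedUnder_ge (Eventually.of_forall (hu.nonneg hpnn hp0))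
    have hlimsup : limsup u atTop = 0 := by
      refine le_antisymm (not_lt.mp fun hpos => hsum ?_)
        (hliminf.trans (liminf_le_limsup hbdd hbdd'))
      refine summable_of_sum_range_le htail0 (c := 1 / limsup u atTop) fun M => ?_
      rw [le_div_iff₀' hpos]
      exact hu.mul_sum_tailMass_le_one hpnn hp0 hpsum hN hNlim M
    rw [hinfty, ENNReal.toReal_top, div_zero]
    exact tendsto_of_liminf_eq_limsup
      (le_antisymm (hlimsup ▸ liminf_le_limsup hbdd hbdd') hliminf) hlimsup hbdd hbdd'

end IsRenewalSeq

theorem key_renewal_theorem_general (p : ℕ → ℝ) (hpnn : ∀ j, 0 ≤ p j) (hp0 : p 0 = 0)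
    (hpsum : HasSum p 1)
    (hgcd : ∀ c : ℕ, (∀ j : ℕ, 0 < p j → c ∣ j) → c = 1)
    (u : ℕ → ℝ) (hu : ∀ m, u m = ∑' k : ℕ, convPow p k m)
    (b : ℕ → ℝ) (hbsum : Summable b)
    (a : ℕ → ℝ) (ha : ∀ n, a n = ∑ m ∈ Finset.range (n + 1), b (n - m) * u m) :
    Tendsto a atTop
      (𝓝 ((∑' m : ℕ, b m) / (∑' j : ℕ, (j : ℝ≥0∞) * ENNReal.ofReal (p j)).toReal)) := by
  have hren : IsRenewalSeq p u := funext hu ▸ isRenewalSeq_tsum_convPow hp0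
  have hconv : a = fun n => ∑ k ∈ range (n + 1), b k * u (n - k) := funext fun n => by
    rw [ha, ← sum_range_reflect]
    exact sum_congr rfl fun k hk => by
      rw [add_tsub_cancel_right, Nat.sub_sub_self (Nat.lt_succ_iff.mp (mem_range.mp hk))]
  rw [hconv, div_eq_mul_one_div, ← tsum_mul_right]
  exact tendsto_sum_range_mul hbsum tendsto_id (fun _ _ => hren.abs_le_one hpnn hp0 hpsum _)
    fun k => (hren.tendsto hpnn hp0 hpsum hgcd).comp (tendsto_sub_atTop_nat k)

/-- Key renewal theorem, arithmetic case: for an aperiodic probability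
mass function `p` on ℕ with `p 0 = 0`, the renewal mass function `u_m = Σ_k p^{*k}(m)`
and a summable nonnegative sequence `b`, the sequence `a_n = Σ_{m=0}^n b_{n-m} u_m`
converges to `(Σ_m b_m) / (Σ_j j p_j)`, interpreted as `0` when `Σ_j j p_j = ∞`. -/
theorem key_renewal_theorem (p : ℕ → ℝ) (hpnn : ∀ j, 0 ≤ p j) (hp0 : p 0 = 0)
    (hpsum : HasSum p 1)
    (hgcd : ∀ c : ℕ, (∀ j : ℕ, 0 < p j → c ∣ j) → c = 1)
    (u : ℕ → ℝ) (hu : ∀ m, u m = ∑' k : ℕ, convPow p k m)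
    (b : ℕ → ℝ) (hbnn : ∀ n, 0 ≤ b n) (hbsum : Summable b)
    (a : ℕ → ℝ) (ha : ∀ n, a n = ∑ m ∈ Finset.range (n + 1), b (n - m) * u m) :
    Tendsto a atTop
      (𝓝 ((∑' m : ℕ, b m) / (∑' j : ℕ, (j : ℝ≥0∞) * ENNReal.ofReal (p j)).toReal)) :=
  key_renewal_theorem_general p hpnn hp0 hpsum hgcd u hu b hbsum a ha

end
end

section
/- In the zero-delay regenerative setting, for integers r, ℓ ≥ 0, the sequence a_n := E[|Ξ_{κ(n)}|^r T_{κ(n)}^ℓ] satisfies the renewal equation a_n = Σ_{m=0}^{n} b_{n−m} u_m for every n ≥ 0, where b_n := E[|Ξ₁|^r T₁^ℓ 1_{T₁ > n}] and u_m := Σ_{k≥0} P(τ_k = m). Moreover Σ_{n≥0} b_n = E[|Ξ₁|^r T₁^{ℓ+1}]. -/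
open MeasureTheory ProbabilityTheory Filter Finset
open scoped ENNReal Topology

noncomputable section

/-- Tensor product of two vectors in `ℝ^d`, viewed as a `d × d` matrix. -/
def tens {d : ℕ} (x y : Fin d → ℝ) : Fin d × Fin d → ℝ := fun ij => x ij.1 * y ij.2

/-- Transpose of a matrix indexed by `Fin d × Fin d`. -/
def transp {d : ℕ} (A : Fin d × Fin d → ℝ) : Fin d × Fin d → ℝ := fun ij => A (ij.2, ij.1)

/-- Antisymmetric part of a matrix: `Antisym(A) = ½ (A − Aᵀ)`. -/
def antisym {d : ℕ} (A : Fin d × Fin d → ℝ) : Fin d × Fin d → ℝ :=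
  (2⁻¹ : ℝ) • (A - transp A)

/-- Discrete Stratonovich iterated sum
`I^Str_{M,N}(X) = Σ_{k=M+1}^N (X_{M,k-1} ⊗ X_{k-1,k} − ½ X_{k-1,k} ⊗ X_{k-1,k})`. -/
def IStr {d : ℕ} (X : ℕ → Fin d → ℝ) (M N : ℕ) : Fin d × Fin d → ℝ :=
  ∑ k ∈ Finset.Icc (M + 1) N,
    (tens (X (k - 1) - X M) (X k - X (k - 1))
      - (2⁻¹ : ℝ) • tens (X k - X (k - 1)) (X k - X (k - 1)))

/-- Diffusively rescaled linear interpolation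
`X^{(n)}_t = n^{-1/2} X_{⌊nt⌋} + n^{-1/2}(nt − ⌊nt⌋)(X_{⌊nt⌋+1} − X_{⌊nt⌋})`. -/
def interp {E : Type*} [AddCommGroup E] [Module ℝ E] (X : ℕ → E) (n : ℕ) (t : ℝ) : E :=
  (Real.sqrt n)⁻¹ • X ⌊(n : ℝ) * t⌋₊ +
    (((n : ℝ) * t - ⌊(n : ℝ) * t⌋₊) / Real.sqrt n) • (X (⌊(n : ℝ) * t⌋₊ + 1) - X ⌊(n : ℝ) * t⌋₊)

/-- Rescaled interpolated second-level (iterated-sum) process `𝕏^{(n)}_{s,t}`. -/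
def interp2 {d : ℕ} (X : ℕ → Fin d → ℝ) (n : ℕ) (s t : ℝ) : Fin d × Fin d → ℝ :=
  ((n : ℝ))⁻¹ • IStr X ⌊(n : ℝ) * s⌋₊ ⌊(n : ℝ) * t⌋₊ +
    (((n : ℝ) * (t - s) - ⌊(n : ℝ) * t⌋₊ + ⌊(n : ℝ) * s⌋₊) / n) •
      (IStr X ⌊(n : ℝ) * s⌋₊ (⌊(n : ℝ) * t⌋₊ + 1) - IStr X ⌊(n : ℝ) * s⌋₊ ⌊(n : ℝ) * t⌋₊)

/-- `p`-variation norm on `[0,T]` of a one-parameter path, with values in `ℝ≥0∞`. -/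
def pVar {E : Type*} [SeminormedAddGroup E] (p T : ℝ) (f : ℝ → E) : ℝ≥0∞ :=
  (⨆ (m : ℕ) (t : ℕ → ℝ) (_ : Monotone t) (_ : t 0 = 0) (_ : t m = T),
    ∑ i ∈ Finset.range m, (‖f (t (i + 1)) - f (t i)‖₊ : ℝ≥0∞) ^ p) ^ p⁻¹

/-- `q`-variation norm on `[0,T]` of a two-parameter increment process `F = (F_{s,t})`. -/
def pVar2 {E : Type*} [SeminormedAddGroup E] (q T : ℝ) (F : ℝ → ℝ → E) : ℝ≥0∞ :=
  (⨆ (m : ℕ) (t : ℕ → ℝ) (_ : Monotone t) (_ : t 0 = 0) (_ : t m = T),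
    ∑ i ∈ Finset.range m, (‖F (t i) (t (i + 1))‖₊ : ℝ≥0∞) ^ q) ^ q⁻¹

/-- Regeneration interval `T_k = τ_{k+1} − τ_k`. -/
def regInt {Ω : Type*} (τ : ℕ → Ω → ℕ) (k : ℕ) (ω : Ω) : ℕ := τ (k + 1) ω - τ k ω

/-- The `k`-th regeneration block: the pair consisting of `T_k` and the increment path
`(X_{τ_k, τ_k + m})_{0 ≤ m ≤ T_k}` (frozen after time `T_k`). -/
def block {Ω : Type*} {d : ℕ} (X : ℕ → Ω → (Fin d → ℝ)) (τ : ℕ → Ω → ℕ) (k : ℕ) (ω : Ω) :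
    ℕ × (ℕ → Fin d → ℝ) :=
  (regInt τ k ω, fun m => X (τ k ω + min m (regInt τ k ω)) ω - X (τ k ω) ω)

/-- `Ξ_m^i = max{|X^i_{τ_m, τ_m + k}| : 0 ≤ k ≤ T_m}`. -/
def XiC {Ω : Type*} {d : ℕ} (X : ℕ → Ω → (Fin d → ℝ)) (τ : ℕ → Ω → ℕ) (i : Fin d)
    (m : ℕ) (ω : Ω) : ℝ :=
  (Finset.range (regInt τ m ω + 1)).sup' Finset.nonempty_range_add_one
    (fun k => |X (τ m ω + k) ω i - X (τ m ω) ω i|)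

/-- Euclidean norm `|Ξ_m|` of the vector `Ξ_m = (Ξ_m^1, …, Ξ_m^d)`. -/
def XiNorm {Ω : Type*} {d : ℕ} (X : ℕ → Ω → (Fin d → ℝ)) (τ : ℕ → Ω → ℕ)
    (m : ℕ) (ω : Ω) : ℝ :=
  Real.sqrt (∑ i : Fin d, XiC X τ i m ω ^ 2)

/-- Delayed regenerative increments: `τ₀ = 0`, the `τ_k` are strictly increasing, all data
is measurable, the regeneration blocks form an independent family, and the blocks with
index `k ≥ 1` are identically distributed (hence i.i.d. and independent of the initial
block). -/
structure DelayedRegenerative {Ω : Type*} [MeasurableSpace Ω] (P : Measure Ω) {d : ℕ}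
    (X : ℕ → Ω → (Fin d → ℝ)) (τ : ℕ → Ω → ℕ) : Prop where
  tau_zero : ∀ ω, τ 0 ω = 0
  tau_mono : ∀ ω, StrictMono fun k => τ k ω
  meas_X : ∀ k, Measurable (X k)
  meas_tau : ∀ k, Measurable (τ k)
  indep : iIndepFun (block X τ) P
  ident : ∀ k : ℕ, 1 ≤ k → IdentDistrib (block X τ k) (block X τ 1) P P

/-- Assumption (A): for every coordinate `i`, every `m ∈ {0,1}` and `q ∈ {0,2}`,
`0 < E[(Ξ_m^i)^q T_m] < ∞`. -/
def AssumptionA {Ω : Type*} [MeasurableSpace Ω] (P : Measure Ω) {d : ℕ}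
    (X : ℕ → Ω → (Fin d → ℝ)) (τ : ℕ → Ω → ℕ) : Prop :=
  ∀ i : Fin d, ∀ m ∈ ({0, 1} : Set ℕ), ∀ q ∈ ({0, 2} : Set ℕ),
    Integrable (fun ω => XiC X τ i m ω ^ q * (regInt τ m ω : ℝ)) P ∧
      0 < ∫ ω, XiC X τ i m ω ^ q * (regInt τ m ω : ℝ) ∂P

/-- Centering: `E[X_{τ_k, τ_{k+1}}] = 0` (componentwise, with integrability) for `k ≥ 1`. -/
def Centered {Ω : Type*} [MeasurableSpace Ω] (P : Measure Ω) {d : ℕ}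
    (X : ℕ → Ω → (Fin d → ℝ)) (τ : ℕ → Ω → ℕ) : Prop :=
  ∀ k : ℕ, 1 ≤ k → ∀ i : Fin d,
    Integrable (fun ω => X (τ (k + 1) ω) ω i - X (τ k ω) ω i) P ∧
      ∫ ω, (X (τ (k + 1) ω) ω i - X (τ k ω) ω i) ∂P = 0


/-! Split `a_n` according to the index `k` of the block straddling `n` and the time `m = τ_k ≤ n`
at which it starts: the block then straddles `n` iff `T_k > n - m`. Since `τ_k` is a function of
the blocks before `k`, the event `{τ_k = m}` is independent of block `k`, which is distributed as
block `1`; this gives `P(τ_k = m) b_{n-m}` and, summed over `k`, the renewal convolution. The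
identity for `Σ b_n` is `Σ_n 1{n < T} = T` under the integral. -/

lemma ENNReal.tsum_ite_lt_eq_mul (T : ℕ) (x : ℝ≥0∞) :
    ∑' n : ℕ, (if n < T then x else 0) = T * x := by
  rw [tsum_eq_sum (s := range T) fun n hn => if_neg (by simpa using hn),
    sum_congr rfl fun n hn => if_pos (mem_range.mp hn), sum_const, card_range, nsmul_eq_mul]

lemma eq_of_straddle {τ : ℕ → ℕ} (hτ : Monotone τ) {n j k : ℕ}
    (hj : τ j ≤ n ∧ n < τ (j + 1)) (hk : τ k ≤ n ∧ n < τ (k + 1)) : j = k := by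
  by_contra hne
  rcases Nat.lt_or_gt_of_ne hne with h | h
  · have := hτ (show j + 1 ≤ k by omega); omega
  · have := hτ (show k + 1 ≤ j by omega); omega

lemma tsum_sum_range_ite_eq_of_straddle {τ : ℕ → ℕ} (hτ : Monotone τ) {n κ : ℕ}
    (hκ : τ κ ≤ n ∧ n < τ (κ + 1)) (g : ℕ → ℝ≥0∞) :
    ∑' k, ∑ m ∈ range (n + 1),
      (if τ k = m then (if n - m < τ (k + 1) - τ k then g k else 0) else 0) = g κ := by
  have hstraddle : ∀ k, ∑ m ∈ range (n + 1),
      (if τ k = m then (if n - m < τ (k + 1) - τ k then g k else 0) else 0)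
        = if τ k ≤ n ∧ n < τ (k + 1) then g k else 0 := by
    intro k
    rw [sum_ite_eq]
    have hle := hτ (Nat.le_succ k)
    by_cases h : τ k ≤ n
    · simp only [mem_range, Nat.lt_succ_iff.mpr h, h, true_and, if_true]
      congr 1
      exact propext (by omega)
    · simp [mem_range, h]
  rw [tsum_congr hstraddle, tsum_eq_single κ fun k hk => if_neg fun h => hk
    (eq_of_straddle hτ h hκ), if_pos hκ]

lemma measurable_apply_of_countable {Ω ι β : Type*} [MeasurableSpace Ω] [MeasurableSpace ι]
    [Countable ι] [MeasurableSingletonClass ι] [MeasurableSpace β] {X : ι → Ω → β}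
    (hX : ∀ i, Measurable (X i)) {N : Ω → ι} (hN : Measurable N) :
    Measurable fun ω => X (N ω) ω :=
  (measurable_from_prod_countable_left (f := fun p : Ω × ι => X p.2 p.1) hX).comp
    (measurable_id.prodMk hN)

lemma ProbabilityTheory.IndepFun.lintegral_indicator_preimage {Ω α β : Type*} [MeasurableSpace Ω]
    [MeasurableSpace α] [MeasurableSpace β] {P : Measure Ω} {S : Ω → α} {Y : Ω → β}
    (hSY : IndepFun S Y P) (hS : Measurable S) (hY : Measurable Y) {s : Set α}
    (hs : MeasurableSet s) {f : β → ℝ≥0∞} (hf : Measurable f) :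
    ∫⁻ ω, (S ⁻¹' s).indicator (fun ω => f (Y ω)) ω ∂P = P (S ⁻¹' s) * ∫⁻ ω, f (Y ω) ∂P := by
  have hind : IndepFun (s.indicator (1 : α → ℝ≥0∞) ∘ S) (f ∘ Y) P :=
    hSY.comp (measurable_one.indicator hs) hf
  have hsplit : ∀ ω, (S ⁻¹' s).indicator (fun ω => f (Y ω)) ω
      = (s.indicator 1 ∘ S) ω * (f ∘ Y) ω := by
    intro ω
    by_cases h : S ω ∈ s <;> simp [h]
  rw [lintegral_congr hsplit, lintegral_mul_eq_lintegral_mul_lintegral_of_indepFun''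
    ((measurable_one.indicator hs).comp hS).aemeasurable (hf.comp hY).aemeasurable hind,
    ← lintegral_indicator_one (hS hs)]
  rfl

lemma ProbabilityTheory.iIndepFun.indepFun_sum_range {Ω β : Type*} [MeasurableSpace Ω]
    [MeasurableSpace β] {P : Measure Ω} {B : ℕ → Ω → β} (hB : iIndepFun B P)
    (hmeas : ∀ k, Measurable (B k)) {h : β → ℕ} (hh : Measurable h) (k : ℕ) :
    IndepFun (fun ω => ∑ j ∈ range k, h (B j ω)) (B k) P := by
  have hdisj : Disjoint (range k) {k} := by simp
  have hsum : Measurable fun v : range k → β => ∑ j, h (v j) :=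
    Finset.measurable_sum _ fun j _ => hh.comp (measurable_pi_apply j)
  convert (hB.indepFun_finset _ _ hdisj hmeas).comp hsum
    (measurable_pi_apply ⟨k, mem_singleton_self k⟩) using 1
  · funext ω
    exact (sum_coe_sort (range k) fun j => h (B j ω)).symm
  · rfl

section Blocks

variable {d : ℕ}

def blockWeight (r ℓ : ℕ) (B : ℕ × (ℕ → Fin d → ℝ)) : ℝ≥0∞ :=
  ENNReal.ofReal (√(∑ i, ((range (B.1 + 1)).sup' nonempty_range_add_one
    fun k => |B.2 k i|) ^ 2) ^ r * (B.1 : ℝ) ^ ℓ)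

lemma measurable_blockWeight (r ℓ : ℕ) : Measurable (blockWeight (d := d) r ℓ) := by
  refine ENNReal.measurable_ofReal.comp (measurable_from_prod_countable_right fun T => ?_)
  dsimp only
  refine ((Measurable.sqrt ?_).pow_const _).mul_const _
  refine Finset.measurable_sum _ fun i _ => Measurable.pow_const ?_ _
  exact Finset.measurable_range_sup'' fun k _ =>
    ((measurable_pi_apply i).comp (measurable_pi_apply k)).abs

lemma blockWeight_succ (r ℓ : ℕ) (B : ℕ × (ℕ → Fin d → ℝ)) :
    blockWeight r (ℓ + 1) B = B.1 * blockWeight r ℓ B := by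
  rw [blockWeight, blockWeight, ← ENNReal.ofReal_natCast,
    ← ENNReal.ofReal_mul (Nat.cast_nonneg _), pow_succ]
  ring_nf

def truncBlockWeight (r ℓ j : ℕ) : ℕ × (ℕ → Fin d → ℝ) → ℝ≥0∞ :=
  {B | j < B.1}.indicator (blockWeight r ℓ)

lemma measurable_truncBlockWeight (r ℓ j : ℕ) : Measurable (truncBlockWeight (d := d) r ℓ j) :=
  (measurable_blockWeight r ℓ).indicator (measurable_fst measurableSet_Ioi)

lemma tsum_truncBlockWeight (r ℓ : ℕ) (B : ℕ × (ℕ → Fin d → ℝ)) :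
    ∑' j, truncBlockWeight r ℓ j B = blockWeight r (ℓ + 1) B := by
  simp only [truncBlockWeight, Set.indicator_apply, Set.mem_ofPred_eq,
    ENNReal.tsum_ite_lt_eq_mul, blockWeight_succ]

variable {Ω : Type*} [MeasurableSpace Ω] {P : Measure Ω} {X : ℕ → Ω → (Fin d → ℝ)}
  {τ : ℕ → Ω → ℕ}

omit [MeasurableSpace Ω] in
lemma blockWeight_block (r ℓ k : ℕ) (ω : Ω) :
    blockWeight r ℓ (block X τ k ω)
      = ENNReal.ofReal (XiNorm X τ k ω ^ r * (regInt τ k ω : ℝ) ^ ℓ) := by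
  have hsup : ∀ i, (range (regInt τ k ω + 1)).sup' nonempty_range_add_one
      (fun m => |X (τ k ω + min m (regInt τ k ω)) ω i - X (τ k ω) ω i|) = XiC X τ i k ω :=
    fun i => sup'_congr _ rfl fun m hm => by
      rw [min_eq_left (Nat.lt_succ_iff.mp (mem_range.mp hm))]
  simp only [blockWeight, block, XiNorm, Pi.sub_apply, hsup]

omit [MeasurableSpace Ω] in
lemma blockWeight_block_eq_tsum_sum_indicator (r ℓ : ℕ) {n κ : ℕ} {ω : Ω}
    (hτ : Monotone fun k => τ k ω) (hκ : τ κ ω ≤ n ∧ n < τ (κ + 1) ω) :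
    blockWeight r ℓ (block X τ κ ω) = ∑' k, ∑ m ∈ range (n + 1),
      (τ k ⁻¹' {m}).indicator (fun ω => truncBlockWeight r ℓ (n - m) (block X τ k ω)) ω := by
  classical
  rw [← tsum_sum_range_ite_eq_of_straddle hτ hκ fun k => blockWeight r ℓ (block X τ k ω)]
  simp only [truncBlockWeight, Set.indicator_apply, Set.mem_preimage, Set.mem_singleton_iff,
    Set.mem_ofPred_eq]
  rfl

lemma lintegral_truncBlockWeight_block (hτ : ∀ k, Measurable (τ k)) (r ℓ j k : ℕ) :
    ∫⁻ ω, truncBlockWeight r ℓ j (block X τ k ω) ∂P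
      = ∫⁻ ω in {ω | j < regInt τ k ω},
          ENNReal.ofReal (XiNorm X τ k ω ^ r * (regInt τ k ω : ℝ) ^ ℓ) ∂P := by
  rw [← lintegral_indicator (s := {ω | j < regInt τ k ω})
    (((hτ (k + 1)).sub (hτ k)) measurableSet_Ioi)]
  refine lintegral_congr fun ω => ?_
  simp only [truncBlockWeight, Set.indicator_apply, Set.mem_ofPred_eq, blockWeight_block]
  rfl

lemma measurable_block (hX : ∀ k, Measurable (X k)) (hτ : ∀ k, Measurable (τ k)) (k : ℕ) :
    Measurable (block X τ k) := by
  have hT : Measurable (regInt τ k) := (hτ (k + 1)).sub (hτ k)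
  refine hT.prodMk (measurable_pi_lambda _ fun m => ?_)
  exact (measurable_apply_of_countable hX ((hτ k).add (measurable_const.min hT))).sub
    (measurable_apply_of_countable hX (hτ k))

lemma DelayedRegenerative.identDistrib_block (hreg : DelayedRegenerative P X τ)
    (hzero : IdentDistrib (block X τ 0) (block X τ 1) P P) (k : ℕ) :
    IdentDistrib (block X τ k) (block X τ 1) P P := by
  rcases Nat.eq_zero_or_pos k with rfl | hk
  · exact hzero
  · exact hreg.ident k hk

lemma DelayedRegenerative.lintegral_indicator_tau_eq (hreg : DelayedRegenerative P X τ)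
    (hzero : IdentDistrib (block X τ 0) (block X τ 1) P P) (k m : ℕ)
    {f : ℕ × (ℕ → Fin d → ℝ) → ℝ≥0∞} (hf : Measurable f) :
    ∫⁻ ω, (τ k ⁻¹' {m}).indicator (fun ω => f (block X τ k ω)) ω ∂P
      = P (τ k ⁻¹' {m}) * ∫⁻ ω, f (block X τ 1 ω) ∂P := by
  have hτ_sum : τ k = fun ω => ∑ j ∈ range k, (block X τ j ω).1 := by
    funext ω
    rw [show τ k ω = τ k ω - τ 0 ω by rw [hreg.tau_zero, Nat.sub_zero]]
    exact (sum_range_tsub (hreg.tau_mono ω).monotone k).symm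
  have hmeasB := measurable_block hreg.meas_X hreg.meas_tau
  have hindep := hreg.indep.indepFun_sum_range hmeasB measurable_fst k
  have hident : ∫⁻ ω, f (block X τ k ω) ∂P = ∫⁻ ω, f (block X τ 1 ω) ∂P :=
    ((hreg.identDistrib_block hzero k).comp hf).lintegral_eq
  rw [← hident, hτ_sum]
  exact hindep.lintegral_indicator_preimage (hτ_sum ▸ hreg.meas_tau k) (hmeasB k)
    (measurableSet_singleton m) hf

lemma DelayedRegenerative.lintegral_tsum_sum_indicator_tau_eq
    (hreg : DelayedRegenerative P X τ) (hzero : IdentDistrib (block X τ 0) (block X τ 1) P P)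
    (r ℓ n : ℕ) :
    ∫⁻ ω, ∑' k, ∑ m ∈ range (n + 1),
        (τ k ⁻¹' {m}).indicator (fun ω => truncBlockWeight r ℓ (n - m) (block X τ k ω)) ω ∂P
      = ∑' k, ∑ m ∈ range (n + 1),
          P (τ k ⁻¹' {m}) * ∫⁻ ω, truncBlockWeight r ℓ (n - m) (block X τ 1 ω) ∂P := by
  have hmeas : ∀ k m, Measurable fun ω =>
      (τ k ⁻¹' {m}).indicator (fun ω => truncBlockWeight r ℓ (n - m) (block X τ k ω)) ω :=
    fun k m => ((measurable_truncBlockWeight r ℓ _).comp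
      (measurable_block hreg.meas_X hreg.meas_tau k)).indicator
        (hreg.meas_tau k (measurableSet_singleton m))
  rw [lintegral_tsum fun k => (Finset.measurable_sum _ fun m _ => hmeas k m).aemeasurable]
  refine tsum_congr fun k => ?_
  rw [lintegral_finsetSum _ fun m _ => hmeas k m]
  exact sum_congr rfl fun m _ =>
    hreg.lintegral_indicator_tau_eq hzero k m (measurable_truncBlockWeight r ℓ _)

end Blocks

theorem renewal_equation_for_straddling_block_general {Ω : Type*} [MeasurableSpace Ω]
    (P : Measure Ω) {d : ℕ}
    (X : ℕ → Ω → (Fin d → ℝ)) (τ : ℕ → Ω → ℕ)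
    (hreg : DelayedRegenerative P X τ)
    (hzero : IdentDistrib (block X τ 0) (block X τ 1) P P)
    (κ : ℕ → Ω → ℕ) (hκ : ∀ (n : ℕ) (ω : Ω), τ (κ n ω) ω ≤ n ∧ n < τ (κ n ω + 1) ω)
    (r ℓ : ℕ)
    (a : ℕ → ℝ≥0∞)
    (ha : ∀ n, a n =
      ∫⁻ ω, ENNReal.ofReal (XiNorm X τ (κ n ω) ω ^ r * (regInt τ (κ n ω) ω : ℝ) ^ ℓ) ∂P)
    (b : ℕ → ℝ≥0∞)
    (hb : ∀ n, b n = ∫⁻ ω in {ω | n < regInt τ 1 ω},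
      ENNReal.ofReal (XiNorm X τ 1 ω ^ r * (regInt τ 1 ω : ℝ) ^ ℓ) ∂P)
    (u : ℕ → ℝ≥0∞) (hu : ∀ m, u m = ∑' k : ℕ, P {ω | τ k ω = m}) :
    (∀ n : ℕ, a n = ∑ m ∈ Finset.range (n + 1), b (n - m) * u m) ∧
      (∑' n : ℕ, b n) =
        ∫⁻ ω, ENNReal.ofReal (XiNorm X τ 1 ω ^ r * (regInt τ 1 ω : ℝ) ^ (ℓ + 1)) ∂P := by
  have hb_trunc : ∀ j, b j = ∫⁻ ω, truncBlockWeight r ℓ j (block X τ 1 ω) ∂P := fun j => by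
    rw [hb, lintegral_truncBlockWeight_block hreg.meas_tau]
  refine ⟨fun n => ?_, ?_⟩
  · calc a n = ∫⁻ ω, ∑' k, ∑ m ∈ range (n + 1),
          (τ k ⁻¹' {m}).indicator (fun ω => truncBlockWeight r ℓ (n - m) (block X τ k ω)) ω ∂P :=
          (ha n).trans <| lintegral_congr fun ω => by
            rw [← blockWeight_block, blockWeight_block_eq_tsum_sum_indicator r ℓ
              (hreg.tau_mono ω).monotone (hκ n ω)]
      _ = ∑' k, ∑ m ∈ range (n + 1), P (τ k ⁻¹' {m}) * b (n - m) := by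
          simp only [hreg.lintegral_tsum_sum_indicator_tau_eq hzero, hb_trunc]
      _ = ∑ m ∈ range (n + 1), b (n - m) * u m := by
          rw [Summable.tsum_finsetSum fun _ _ => ENNReal.summable]
          refine sum_congr rfl fun m _ => ?_
          rw [ENNReal.tsum_mul_right, mul_comm, hu]
          rfl
  · calc ∑' n, b n = ∫⁻ ω, ∑' n, truncBlockWeight r ℓ n (block X τ 1 ω) ∂P := by
          simp_rw [hb_trunc]
          exact (lintegral_tsum fun n =>
            ((measurable_truncBlockWeight r ℓ n).comp
              (measurable_block hreg.meas_X hreg.meas_tau 1)).aemeasurable).symm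
      _ = _ := lintegral_congr fun ω => by rw [tsum_truncBlockWeight, blockWeight_block]

/-- in the zero-delay (i.i.d. blocks) regenerative setting, the sequence
`a_n = E[|Ξ_{κ(n)}|^r T_{κ(n)}^ℓ]` satisfies the renewal equation
`a_n = Σ_{m=0}^n b_{n−m} u_m` with `b_n = E[|Ξ₁|^r T₁^ℓ 1_{T₁ > n}]` and
`u_m = Σ_k P(τ_k = m)`; moreover `Σ_n b_n = E[|Ξ₁|^r T₁^{ℓ+1}]`
(all quantities taken in `ℝ≥0∞`). -/
theorem renewal_equation_for_straddling_block {Ω : Type*} [MeasurableSpace Ω]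
    (P : Measure Ω) [IsProbabilityMeasure P] {d : ℕ}
    (X : ℕ → Ω → (Fin d → ℝ)) (τ : ℕ → Ω → ℕ)
    (hreg : DelayedRegenerative P X τ)
    (hzero : IdentDistrib (block X τ 0) (block X τ 1) P P)
    (κ : ℕ → Ω → ℕ) (hκ : ∀ (n : ℕ) (ω : Ω), τ (κ n ω) ω ≤ n ∧ n < τ (κ n ω + 1) ω)
    (r ℓ : ℕ)
    (a : ℕ → ℝ≥0∞)
    (ha : ∀ n, a n =
      ∫⁻ ω, ENNReal.ofReal (XiNorm X τ (κ n ω) ω ^ r * (regInt τ (κ n ω) ω : ℝ) ^ ℓ) ∂P)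
    (b : ℕ → ℝ≥0∞)
    (hb : ∀ n, b n = ∫⁻ ω in {ω | n < regInt τ 1 ω},
      ENNReal.ofReal (XiNorm X τ 1 ω ^ r * (regInt τ 1 ω : ℝ) ^ ℓ) ∂P)
    (u : ℕ → ℝ≥0∞) (hu : ∀ m, u m = ∑' k : ℕ, P {ω | τ k ω = m}) :
    (∀ n : ℕ, a n = ∑ m ∈ Finset.range (n + 1), b (n - m) * u m) ∧
      (∑' n : ℕ, b n) =
        ∫⁻ ω, ENNReal.ofReal (XiNorm X τ 1 ω ^ r * (regInt τ 1 ω : ℝ) ^ (ℓ + 1)) ∂P :=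
  renewal_equation_for_straddling_block_general P X τ hreg hzero κ hκ r ℓ a ha b hb u hu
end
end

section
/- Under Assumption (A), there exists a constant C (independent of n) such that E[‖X^{(n)} − V^{(n)}‖²_{2,[0,T]}] ≤ C for all n ≥ 1, where V^{(n)}_t := n^{−1/2} X_{τ_{κ(nt)}} and ‖·‖_{2,[0,T]} is the 2-variation norm. -/
open MeasureTheory ProbabilityTheory Filter Finset
open scoped ENNReal Topology

noncomputable section

/-!
Write `g(u) = L(u) - x_{τ_{κ(u)}}` for the piecewise linear interpolation `L` of the unscaled
path, so that `X^{(n)} - V^{(n)} = n^{-1/2} g(n ·)`. Inside the `k`-th regeneration block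
`‖g‖ ≤ |Ξ_k|` and `g` is `2|Ξ_k|`-Lipschitz, so an increment of `g` over `[u, v]` within one block
has square at most `4 |Ξ_k|² (v - u)`, while an increment jumping from block `k` to block `k'`
has square at most `2 |Ξ_k|² + 2 |Ξ_{k'}|²`. Both are dominated by the increments of a monotone
potential, so every partition sum of `g` up to time `nT` is at most
`8 ∑_{k ≤ nT} |Ξ_k|² T_k`. Taking expectations, the blocks `k ≥ 1` are identically distributed,
which gives the bound `8 (E[|Ξ_0|² T_0] + T E[|Ξ_1|² T_1])`, finite by Assumption (A).
-/

def linInterp {E : Type*} [AddCommGroup E] [Module ℝ E] (x : ℕ → E) (u : ℝ) : E :=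
  x ⌊u⌋₊ + (u - ⌊u⌋₊) • (x (⌊u⌋₊ + 1) - x ⌊u⌋₊)

theorem interp_eq_smul_linInterp {E : Type*} [AddCommGroup E] [Module ℝ E] (x : ℕ → E) (n : ℕ)
    (t : ℝ) : interp x n t = (Real.sqrt n)⁻¹ • linInterp x (n * t) := by
  rw [interp, linInterp, smul_add, smul_smul, div_eq_inv_mul]

section LinInterp

variable {E : Type*} [NormedAddCommGroup E] [NormedSpace ℝ E] {x : ℕ → E}

theorem linInterp_of_mem_Icc {j : ℕ} {u : ℝ} (hj : (j : ℝ) ≤ u) (hu : u ≤ j + 1) :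
    linInterp x u = x j + (u - j) • (x (j + 1) - x j) := by
  rcases hu.lt_or_eq with hu | rfl
  · rw [linInterp, (Nat.floor_eq_iff ((Nat.cast_nonneg j).trans hj)).2 ⟨hj, hu⟩]
  · have : ⌊(j : ℝ) + 1⌋₊ = j + 1 := by exact_mod_cast Nat.floor_natCast (j + 1)
    simp [linInterp, this]

theorem norm_linInterp_sub_le {y : E} {r u : ℝ} (hu : 0 ≤ u) (h₀ : ‖x ⌊u⌋₊ - y‖ ≤ r)
    (h₁ : ‖x (⌊u⌋₊ + 1) - y‖ ≤ r) : ‖linInterp x u - y‖ ≤ r := by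
  rw [← mem_closedBall_iff_norm] at h₀ h₁ ⊢
  exact (convex_closedBall y r).add_smul_sub_mem h₀ h₁
    ⟨sub_nonneg.2 (Nat.floor_le hu), by linarith [Nat.lt_floor_add_one u]⟩

theorem norm_linInterp_sub_linInterp_of_mem_Icc {j : ℕ} {u v : ℝ} (hj : (j : ℝ) ≤ u)
    (huv : u ≤ v) (hv : v ≤ j + 1) :
    ‖linInterp x v - linInterp x u‖ = (v - u) * ‖x (j + 1) - x j‖ := by
  rw [linInterp_of_mem_Icc (hj.trans huv) hv, linInterp_of_mem_Icc hj (huv.trans hv),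
    add_sub_add_left_eq_sub, ← sub_smul, sub_sub_sub_cancel_right, norm_smul,
    Real.norm_of_nonneg (sub_nonneg.2 huv)]

theorem norm_linInterp_sub_linInterp_le_of_le_floor_add_one {L u v : ℝ} (hu : 0 ≤ u)
    (huv : u ≤ v) (hv : v ≤ ⌊u⌋₊ + 1) (hL : ‖x (⌊u⌋₊ + 1) - x ⌊u⌋₊‖ ≤ L) :
    ‖linInterp x v - linInterp x u‖ ≤ L * (v - u) := by
  rw [norm_linInterp_sub_linInterp_of_mem_Icc (Nat.floor_le hu) huv hv, mul_comm]
  exact mul_le_mul_of_nonneg_right hL (sub_nonneg.2 huv)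

theorem norm_linInterp_sub_linInterp_le {L u v : ℝ} (hu : 0 ≤ u) (huv : u ≤ v)
    (hL : ∀ j, ⌊u⌋₊ ≤ j → j ≤ ⌊v⌋₊ → ‖x (j + 1) - x j‖ ≤ L) :
    ‖linInterp x v - linInterp x u‖ ≤ L * (v - u) := by
  obtain ⟨N, hN⟩ : ∃ N : ℕ, v ≤ ⌊u⌋₊ + 1 + N :=
    ⟨⌈v⌉₊, by linarith [Nat.le_ceil v, (Nat.cast_nonneg ⌊u⌋₊ : (0 : ℝ) ≤ _)]⟩
  induction N generalizing u with
  | zero =>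
    exact norm_linInterp_sub_linInterp_le_of_le_floor_add_one hu huv (by simpa using hN)
      (hL _ le_rfl (Nat.floor_le_floor huv))
  | succ N ih =>
    by_cases hv : v ≤ ⌊u⌋₊ + 1
    · exact norm_linInterp_sub_linInterp_le_of_le_floor_add_one hu huv hv
        (hL _ le_rfl (Nat.floor_le_floor huv))
    set w : ℝ := ((⌊u⌋₊ + 1 : ℕ) : ℝ)
    have hw : ⌊w⌋₊ = ⌊u⌋₊ + 1 := Nat.floor_natCast _
    have huw : u ≤ w := by push_cast [w]; linarith [Nat.lt_floor_add_one u]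
    have hwv : w ≤ v := by push_cast [w]; linarith
    have hwv' : ⌊w⌋₊ ≤ ⌊v⌋₊ := Nat.floor_le_floor hwv
    calc ‖linInterp x v - linInterp x u‖
        ≤ ‖linInterp x v - linInterp x w‖ + ‖linInterp x w - linInterp x u‖ :=
          norm_sub_le_norm_sub_add_norm_sub _ _ _
      _ ≤ L * (v - w) + L * (w - u) := by
          gcongr
          · exact ih (hu.trans huw) hwv (fun j hj hj' => hL j (by omega) hj')
              (by rw [hw]; push_cast at hN ⊢; linarith)
          · exact norm_linInterp_sub_linInterp_le_of_le_floor_add_one hu huw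
              (by push_cast [w]; rfl) (hL _ le_rfl (by omega))
      _ = L * (v - u) := by ring

end LinInterp

def IsBlockIndex (a : ℕ → ℕ) (κ : ℝ → ℕ) : Prop :=
  ∀ u : ℝ, 0 ≤ u → (a (κ u) : ℝ) ≤ u ∧ u < a (κ u + 1)

namespace IsBlockIndex

variable {a : ℕ → ℕ} {κ : ℝ → ℕ} {u v : ℝ}

theorem le_floor (hκ : IsBlockIndex a κ) (hu : 0 ≤ u) : a (κ u) ≤ ⌊u⌋₊ :=
  Nat.le_floor (hκ u hu).1

theorem floor_lt (hκ : IsBlockIndex a κ) (hu : 0 ≤ u) : ⌊u⌋₊ < a (κ u + 1) := by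
  exact_mod_cast (Nat.floor_le hu).trans_lt (hκ u hu).2

theorem le_floor_self (hκ : IsBlockIndex a κ) (ha : StrictMono a) (hu : 0 ≤ u) : κ u ≤ ⌊u⌋₊ :=
  ha.le_apply.trans (hκ.le_floor hu)

theorem mono (hκ : IsBlockIndex a κ) (ha : StrictMono a) (hu : 0 ≤ u) (huv : u ≤ v) :
    κ u ≤ κ v := by
  by_contra! h
  have : (a (κ v + 1) : ℝ) ≤ a (κ u) := by exact_mod_cast ha.monotone h
  linarith [(hκ u hu).1, (hκ v (hu.trans huv)).2]

end IsBlockIndex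

theorem one_le_cast_succ_sub_cast {a : ℕ → ℕ} (ha : StrictMono a) (j : ℕ) :
    (1 : ℝ) ≤ (a (j + 1) : ℝ) - a j :=
  le_sub_iff_add_le'.2 (by exact_mod_cast ha j.lt_succ_self)

/-- `4 ∫₀ᵘ w_{κ(s)} ds`, plus `4 w_j` for every block `j` already left and `2 w_{κ u}` for the
current one; the last two terms pay for the increments that jump between blocks. -/
def skeletonPotential (a : ℕ → ℕ) (κ : ℝ → ℕ) (w : ℕ → ℝ) (u : ℝ) : ℝ :=
  ∑ j ∈ range (κ u), w j * (4 * ((a (j + 1) : ℝ) - a j) + 4) + w (κ u) * (4 * (u - a (κ u)) + 2)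

section Potential

variable {a : ℕ → ℕ} {κ : ℝ → ℕ} {w : ℕ → ℝ} {u v : ℝ}

theorem skeletonPotential_sub_of_eq (hk : κ u = κ v) :
    skeletonPotential a κ w v - skeletonPotential a κ w u = 4 * w (κ u) * (v - u) := by
  simp only [skeletonPotential, hk]
  ring

theorem add_le_skeletonPotential_sub (ha : StrictMono a) (hκ : IsBlockIndex a κ) (hw : ∀ j, 0 ≤ w j)
    (hu : 0 ≤ u) (huv : u ≤ v) (hk : κ u < κ v) :
    2 * w (κ u) + 2 * w (κ v) ≤ skeletonPotential a κ w v - skeletonPotential a κ w u := by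
  have hsum : ∑ j ∈ range (κ u + 1), w j * (4 * ((a (j + 1) : ℝ) - a j) + 4)
      ≤ ∑ j ∈ range (κ v), w j * (4 * ((a (j + 1) : ℝ) - a j) + 4) :=
    sum_le_sum_of_subset_of_nonneg (range_subset_range.2 hk) fun j _ _ =>
      mul_nonneg (hw j) (by linarith [one_le_cast_succ_sub_cast ha j])
  rw [sum_range_succ] at hsum
  have hu' : w (κ u) * (4 * (u - a (κ u)) + 2)
      ≤ w (κ u) * (4 * ((a (κ u + 1) : ℝ) - a (κ u)) + 2) :=
    mul_le_mul_of_nonneg_left (by linarith [(hκ u hu).2]) (hw _)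
  have hv' : w (κ v) * 2 ≤ w (κ v) * (4 * (v - a (κ v)) + 2) :=
    mul_le_mul_of_nonneg_left (by linarith [(hκ v (hu.trans huv)).1]) (hw _)
  simp only [skeletonPotential]
  linarith

theorem skeletonPotential_nonneg (ha : StrictMono a) (hκ : IsBlockIndex a κ) (hw : ∀ j, 0 ≤ w j)
    (hu : 0 ≤ u) : 0 ≤ skeletonPotential a κ w u :=
  add_nonneg
    (sum_nonneg fun j _ => mul_nonneg (hw j) (by linarith [one_le_cast_succ_sub_cast ha j]))
    (mul_nonneg (hw _) (by linarith [(hκ u hu).1]))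

theorem skeletonPotential_le (ha : StrictMono a) (hκ : IsBlockIndex a κ) (hw : ∀ j, 0 ≤ w j)
    (hu : 0 ≤ u) :
    skeletonPotential a κ w u ≤ 8 * ∑ j ∈ range (κ u + 1), w j * ((a (j + 1) : ℝ) - a j) := by
  rw [sum_range_succ, mul_add, mul_sum, skeletonPotential]
  refine add_le_add (sum_le_sum fun j _ => ?_) ?_
  · nlinarith [one_le_cast_succ_sub_cast ha j, hw j]
  · nlinarith [one_le_cast_succ_sub_cast ha (κ u), hw (κ u), (hκ u hu).2]

end Potential

theorem pVar_two_sq_le {E : Type*} [SeminormedAddGroup E] {T B : ℝ} {f : ℝ → E}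
    (h : ∀ (m : ℕ) (t : ℕ → ℝ), Monotone t → t 0 = 0 → t m = T →
      ∑ i ∈ range m, ‖f (t (i + 1)) - f (t i)‖ ^ 2 ≤ B) :
    pVar 2 T f ^ 2 ≤ ENNReal.ofReal B := by
  rw [pVar, ← ENNReal.rpow_natCast, ← ENNReal.rpow_mul, Nat.cast_ofNat,
    inv_mul_cancel₀ two_ne_zero, ENNReal.rpow_one]
  refine iSup_le fun m => iSup_le fun t => iSup_le fun ht => iSup_le fun h0 => iSup_le fun hm => ?_
  calc ∑ i ∈ range m, (‖f (t (i + 1)) - f (t i)‖₊ : ℝ≥0∞) ^ (2 : ℝ)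
      = ENNReal.ofReal (∑ i ∈ range m, ‖f (t (i + 1)) - f (t i)‖ ^ 2) := by
        rw [ENNReal.ofReal_sum_of_nonneg fun i _ => sq_nonneg _]
        refine sum_congr rfl fun i _ => ?_
        rw [← enorm_eq_nnnorm, ← ofReal_norm,
          ENNReal.ofReal_rpow_of_nonneg (norm_nonneg _) zero_le_two, Real.rpow_two]
    _ ≤ ENNReal.ofReal B := ENNReal.ofReal_le_ofReal (h m t ht h0 hm)

theorem norm_succ_sub_le_of_block {E : Type*} [SeminormedAddGroup E] {x : ℕ → E} {a : ℕ → ℕ}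
    {ρ : ℕ → ℝ} (hρ : ∀ k j, a k ≤ j → j ≤ a (k + 1) → ‖x j - x (a k)‖ ≤ ρ k)
    {k j : ℕ} (hj : a k ≤ j) (hj' : j + 1 ≤ a (k + 1)) : ‖x (j + 1) - x j‖ ≤ 2 * ρ k :=
  calc ‖x (j + 1) - x j‖ = ‖(x (j + 1) - x (a k)) - (x j - x (a k))‖ := by
        rw [sub_sub_sub_cancel_right]
    _ ≤ ρ k + ρ k := (norm_sub_le _ _).trans
        (add_le_add (hρ k _ (hj.trans j.le_succ) hj') (hρ k j hj (j.le_succ.trans hj')))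
    _ = 2 * ρ k := by ring

def skeletonDev {E : Type*} [AddCommGroup E] [Module ℝ E] (x : ℕ → E) (a : ℕ → ℕ) (κ : ℝ → ℕ)
    (u : ℝ) : E :=
  linInterp x u - x (a (κ u))

section Skeleton

variable {E : Type*} [NormedAddCommGroup E] [NormedSpace ℝ E] {x : ℕ → E} {a : ℕ → ℕ}
  {κ : ℝ → ℕ} {ρ : ℕ → ℝ} {u v : ℝ}

theorem norm_skeletonDev_le (hκ : IsBlockIndex a κ)
    (hρ : ∀ k j, a k ≤ j → j ≤ a (k + 1) → ‖x j - x (a k)‖ ≤ ρ k) (hu : 0 ≤ u) :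
    ‖skeletonDev x a κ u‖ ≤ ρ (κ u) :=
  norm_linInterp_sub_le hu (hρ _ _ (hκ.le_floor hu) (hκ.floor_lt hu).le)
    (hρ _ _ ((hκ.le_floor hu).trans (Nat.le_succ _)) (hκ.floor_lt hu))

theorem norm_skeletonDev_sub_le_of_eq (hκ : IsBlockIndex a κ)
    (hρ : ∀ k j, a k ≤ j → j ≤ a (k + 1) → ‖x j - x (a k)‖ ≤ ρ k) (hu : 0 ≤ u) (huv : u ≤ v)
    (hk : κ u = κ v) :
    ‖skeletonDev x a κ v - skeletonDev x a κ u‖ ≤ 2 * ρ (κ u) * (v - u) := by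
  rw [skeletonDev, skeletonDev, ← hk, sub_sub_sub_cancel_right]
  refine norm_linInterp_sub_linInterp_le hu huv fun j hj hj' =>
    norm_succ_sub_le_of_block hρ ((hκ.le_floor hu).trans hj) ?_
  rw [hk]
  exact (Nat.succ_le_succ hj').trans (hκ.floor_lt (hu.trans huv))

theorem sq_norm_skeletonDev_sub_le (ha : StrictMono a) (hκ : IsBlockIndex a κ)
    (hρ : ∀ k j, a k ≤ j → j ≤ a (k + 1) → ‖x j - x (a k)‖ ≤ ρ k) (hu : 0 ≤ u) (huv : u ≤ v) :
    ‖skeletonDev x a κ v - skeletonDev x a κ u‖ ^ 2 ≤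
      skeletonPotential a κ (ρ · ^ 2) v - skeletonPotential a κ (ρ · ^ 2) u := by
  have hρ0 : ∀ k, 0 ≤ ρ k := fun k =>
    (norm_nonneg _).trans (hρ k (a k) le_rfl (ha.monotone k.le_succ))
  have hjump : ‖skeletonDev x a κ v - skeletonDev x a κ u‖ ≤ ρ (κ v) + ρ (κ u) :=
    (norm_sub_le _ _).trans
      (add_le_add (norm_skeletonDev_le hκ hρ (hu.trans huv)) (norm_skeletonDev_le hκ hρ hu))
  rcases (hκ.mono ha hu huv).lt_or_eq with hk | hk
  · calc ‖skeletonDev x a κ v - skeletonDev x a κ u‖ ^ 2 ≤ (ρ (κ v) + ρ (κ u)) ^ 2 :=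
          pow_le_pow_left₀ (norm_nonneg _) hjump 2
      _ ≤ 2 * ρ (κ u) ^ 2 + 2 * ρ (κ v) ^ 2 := by nlinarith [sq_nonneg (ρ (κ u) - ρ (κ v))]
      _ ≤ _ := add_le_skeletonPotential_sub ha hκ (fun k => sq_nonneg (ρ k)) hu huv hk
  · rw [skeletonPotential_sub_of_eq hk, sq]
    calc _ ≤ (2 * ρ (κ u)) * (2 * ρ (κ u) * (v - u)) :=
          mul_le_mul (hjump.trans_eq (by rw [hk]; ring))
            (norm_skeletonDev_sub_le_of_eq hκ hρ hu huv hk) (norm_nonneg _)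
            (mul_nonneg zero_le_two (hρ0 _))
      _ = 4 * ρ (κ u) ^ 2 * (v - u) := by ring

theorem sum_sq_norm_skeletonDev_sub_le (ha : StrictMono a) (hκ : IsBlockIndex a κ)
    (hρ : ∀ k j, a k ≤ j → j ≤ a (k + 1) → ‖x j - x (a k)‖ ≤ ρ k) {t : ℕ → ℝ} (ht : Monotone t)
    (ht0 : 0 ≤ t 0) (m : ℕ) :
    ∑ i ∈ range m, ‖skeletonDev x a κ (t (i + 1)) - skeletonDev x a κ (t i)‖ ^ 2 ≤
      8 * ∑ j ∈ range (⌊t m⌋₊ + 1), ρ j ^ 2 * ((a (j + 1) : ℝ) - a j) := by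
  set Φ := skeletonPotential a κ (ρ · ^ 2)
  have hρ2 : ∀ k, 0 ≤ ρ k ^ 2 := fun k => sq_nonneg _
  have htm : 0 ≤ t m := ht0.trans (ht m.zero_le)
  calc _ ≤ ∑ i ∈ range m, (Φ (t (i + 1)) - Φ (t i)) := sum_le_sum fun i _ =>
        sq_norm_skeletonDev_sub_le ha hκ hρ (ht0.trans (ht i.zero_le)) (ht i.le_succ)
    _ = Φ (t m) - Φ (t 0) := sum_range_sub (fun i => Φ (t i)) m
    _ ≤ Φ (t m) := sub_le_self _ (skeletonPotential_nonneg ha hκ hρ2 ht0)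
    _ ≤ 8 * ∑ j ∈ range (κ (t m) + 1), ρ j ^ 2 * ((a (j + 1) : ℝ) - a j) :=
        skeletonPotential_le ha hκ hρ2 htm
    _ ≤ _ := by
        gcongr 8 * ?_
        exact sum_le_sum_of_subset_of_nonneg
          (range_subset_range.2 (Nat.succ_le_succ (hκ.le_floor_self ha htm))) fun j _ _ =>
            mul_nonneg (hρ2 j) (by linarith [one_le_cast_succ_sub_cast ha j])

theorem sq_pVar_interp_sub_skeleton_le (ha : StrictMono a) (hκ : IsBlockIndex a κ)
    (hρ : ∀ k j, a k ≤ j → j ≤ a (k + 1) → ‖x j - x (a k)‖ ≤ ρ k) (n : ℕ) (T : ℝ) :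
    pVar 2 T (fun t => interp x n t - (Real.sqrt n)⁻¹ • x (a (κ (n * t)))) ^ 2 ≤
      ENNReal.ofReal (8 / n * ∑ j ∈ range (⌊n * T⌋₊ + 1), ρ j ^ 2 * ((a (j + 1) : ℝ) - a j)) := by
  refine pVar_two_sq_le fun m t ht h0 hm => ?_
  have hscale : ∀ s, interp x n s - (Real.sqrt n)⁻¹ • x (a (κ (n * s))) =
      (Real.sqrt n)⁻¹ • skeletonDev x a κ (n * s) := fun s => by
    rw [interp_eq_smul_linInterp, skeletonDev, smul_sub]
  have hnt : Monotone fun i => (n : ℝ) * t i := fun i j hij =>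
    mul_le_mul_of_nonneg_left (ht hij) n.cast_nonneg
  simp_rw [hscale, ← smul_sub, norm_smul, mul_pow, norm_inv,
    Real.norm_of_nonneg (Real.sqrt_nonneg _), inv_pow, Real.sq_sqrt n.cast_nonneg, ← mul_sum]
  calc (n : ℝ)⁻¹ *
        ∑ i ∈ range m, ‖skeletonDev x a κ (n * t (i + 1)) - skeletonDev x a κ (n * t i)‖ ^ 2
      ≤ (n : ℝ)⁻¹ * (8 * ∑ j ∈ range (⌊n * t m⌋₊ + 1), ρ j ^ 2 * ((a (j + 1) : ℝ) - a j)) :=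
        mul_le_mul_of_nonneg_left
          (sum_sq_norm_skeletonDev_sub_le ha hκ hρ hnt (by simp [h0]) m) (by positivity)
    _ = _ := by rw [hm]; ring

end Skeleton

def blockXi {d : ℕ} (b : ℕ × (ℕ → Fin d → ℝ)) (i : Fin d) : ℝ :=
  (range (b.1 + 1)).sup' nonempty_range_add_one fun j => |b.2 j i|

/-- `|Ξ_k|² T_k` as a function of the `k`-th block, so that identical distribution of the blocks
transfers to it. -/
def blockEnergy {d : ℕ} (b : ℕ × (ℕ → Fin d → ℝ)) : ℝ :=
  (∑ i, blockXi b i ^ 2) * b.1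

theorem blockEnergy_nonneg {d : ℕ} (b : ℕ × (ℕ → Fin d → ℝ)) : 0 ≤ blockEnergy b :=
  mul_nonneg (sum_nonneg fun _ _ => sq_nonneg _) b.1.cast_nonneg

theorem measurable_blockEnergy {d : ℕ} : Measurable (blockEnergy (d := d)) := by
  refine measurable_from_prod_countable_right fun N => ?_
  simp only [blockEnergy, blockXi]
  refine Measurable.mul_const (Finset.measurable_sum _ fun i _ => Measurable.pow_const ?_ 2) _
  exact Finset.measurable_range_sup'' fun j _ =>
    ((measurable_pi_apply i).comp (measurable_pi_apply j)).abs

section Regenerative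

variable {Ω : Type*} {d : ℕ} {X : ℕ → Ω → (Fin d → ℝ)} {τ : ℕ → Ω → ℕ}

theorem XiC_eq_blockXi (i : Fin d) (k : ℕ) (ω : Ω) :
    XiC X τ i k ω = blockXi (block X τ k ω) i := by
  refine sup'_congr _ rfl fun j hj => ?_
  rw [mem_range] at hj
  simp only [block, Pi.sub_apply, min_eq_left (Nat.lt_succ_iff.1 hj)]

theorem blockEnergy_block (k : ℕ) (ω : Ω) :
    blockEnergy (block X τ k ω) = ∑ i, XiC X τ i k ω ^ 2 * (regInt τ k ω : ℝ) := by
  simp only [blockEnergy, XiC_eq_blockXi, sum_mul]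
  rfl

theorem XiNorm_sq_mul_eq_blockEnergy {k : ℕ} {ω : Ω} (hτ : τ k ω ≤ τ (k + 1) ω) :
    XiNorm X τ k ω ^ 2 * ((τ (k + 1) ω : ℝ) - τ k ω) = blockEnergy (block X τ k ω) := by
  rw [XiNorm, Real.sq_sqrt (sum_nonneg fun i _ => sq_nonneg _), blockEnergy_block, sum_mul,
    regInt, Nat.cast_sub hτ]

theorem norm_sub_le_XiNorm {k j : ℕ} {ω : Ω} (hj : τ k ω ≤ j) (hj' : j ≤ τ (k + 1) ω) :
    ‖X j ω - X (τ k ω) ω‖ ≤ XiNorm X τ k ω := by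
  refine (pi_norm_le_iff_of_nonneg (Real.sqrt_nonneg _)).2 fun i => ?_
  have hXi : |X j ω i - X (τ k ω) ω i| ≤ XiC X τ i k ω := by
    have hmem : j - τ k ω ∈ range (regInt τ k ω + 1) := by
      rw [mem_range, regInt]
      omega
    have := le_sup' (fun m => |X (τ k ω + m) ω i - X (τ k ω) ω i|) hmem
    rwa [Nat.add_sub_cancel' hj] at this
  calc ‖(X j ω - X (τ k ω) ω) i‖ = |X j ω i - X (τ k ω) ω i| := rfl
    _ ≤ |XiC X τ i k ω| := hXi.trans (le_abs_self _)
    _ ≤ XiNorm X τ k ω := Real.abs_le_sqrt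
        (single_le_sum (f := fun i => XiC X τ i k ω ^ 2) (fun _ _ => sq_nonneg _) (mem_univ i))

theorem sq_pVar_interp_sub_skeleton_le_blockEnergy {κ : ℝ → ℕ} {ω : Ω}
    (hτ : StrictMono (τ · ω)) (hκ : IsBlockIndex (τ · ω) κ) (n : ℕ) (T : ℝ) :
    pVar 2 T (fun t => interp (X · ω) n t - (Real.sqrt n)⁻¹ • X (τ (κ (n * t)) ω) ω) ^ 2 ≤
      ENNReal.ofReal (8 / n * ∑ k ∈ range (⌊n * T⌋₊ + 1), blockEnergy (block X τ k ω)) := by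
  have := sq_pVar_interp_sub_skeleton_le (x := (X · ω)) (ρ := (XiNorm X τ · ω)) hτ hκ
    (fun _ _ => norm_sub_le_XiNorm) n T
  simpa only [XiNorm_sq_mul_eq_blockEnergy (hτ.monotone (Nat.le_succ _))] using this

variable [MeasurableSpace Ω] {P : Measure Ω}

theorem DelayedRegenerative.identDistrib_blockEnergy (hreg : DelayedRegenerative P X τ) {k : ℕ}
    (hk : 1 ≤ k) :
    IdentDistrib (fun ω => blockEnergy (block X τ k ω)) (fun ω => blockEnergy (block X τ 1 ω))
      P P :=
  (hreg.ident k hk).comp measurable_blockEnergy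

theorem integrable_blockEnergy (hreg : DelayedRegenerative P X τ) (hA : AssumptionA P X τ)
    (k : ℕ) : Integrable (fun ω => blockEnergy (block X τ k ω)) P := by
  have hint : ∀ k ∈ ({0, 1} : Set ℕ), Integrable (fun ω => blockEnergy (block X τ k ω)) P :=
    fun k hk => by
      simp only [blockEnergy_block]
      exact integrable_finsetSum _ fun i _ => (hA i k hk 2 (by simp)).1
  rcases k.eq_zero_or_pos with rfl | hk
  · exact hint 0 (by simp)
  · exact (hreg.identDistrib_blockEnergy hk).integrable_iff.2 (hint 1 (by simp))

theorem integral_sum_blockEnergy (hreg : DelayedRegenerative P X τ) (hA : AssumptionA P X τ)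
    (N : ℕ) :
    ∫ ω, ∑ k ∈ range (N + 1), blockEnergy (block X τ k ω) ∂P =
      ∫ ω, blockEnergy (block X τ 0 ω) ∂P + N * ∫ ω, blockEnergy (block X τ 1 ω) ∂P := by
  rw [integral_finsetSum _ fun k _ => integrable_blockEnergy hreg hA k, sum_range_succ',
    sum_congr rfl fun k _ => (hreg.identDistrib_blockEnergy k.succ_pos).integral_eq, sum_const,
    card_range, nsmul_eq_mul, add_comm]

theorem lintegral_ofReal_mul_sum_blockEnergy (hreg : DelayedRegenerative P X τ)
    (hA : AssumptionA P X τ) {c : ℝ} (hc : 0 ≤ c) (N : ℕ) :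
    ∫⁻ ω, ENNReal.ofReal (c * ∑ k ∈ range (N + 1), blockEnergy (block X τ k ω)) ∂P =
      ENNReal.ofReal
        (c * (∫ ω, blockEnergy (block X τ 0 ω) ∂P + N * ∫ ω, blockEnergy (block X τ 1 ω) ∂P)) := by
  rw [← integral_sum_blockEnergy hreg hA, ← integral_const_mul,
    ofReal_integral_eq_lintegral_ofReal
      ((integrable_finsetSum _ fun k _ => integrable_blockEnergy hreg hA k).const_mul c)
      (ae_of_all _ fun ω => mul_nonneg hc (sum_nonneg fun k _ => blockEnergy_nonneg _))]

end Regenerative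

theorem two_variation_distance_to_skeleton_bounded_general {Ω : Type*} [MeasurableSpace Ω]
    (P : Measure Ω) {d : ℕ}
    (X : ℕ → Ω → (Fin d → ℝ)) (τ : ℕ → Ω → ℕ)
    (hreg : DelayedRegenerative P X τ) (hA : AssumptionA P X τ)
    (κ : ℝ → Ω → ℕ)
    (hκ : ∀ u : ℝ, 0 ≤ u → ∀ ω, (τ (κ u ω) ω : ℝ) ≤ u ∧ u < τ (κ u ω + 1) ω)
    (T : ℝ) (hT : 0 < T) :
    ∃ C : ℝ≥0∞, C ≠ ∞ ∧ ∀ n : ℕ, 1 ≤ n →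
      ∫⁻ ω, (pVar 2 T (fun t =>
        interp (fun k => X k ω) n t -
          (Real.sqrt n)⁻¹ • X (τ (κ ((n : ℝ) * t) ω) ω) ω)) ^ 2 ∂P ≤ C := by
  set A := ∫ ω, blockEnergy (block X τ 0 ω) ∂P
  set B := ∫ ω, blockEnergy (block X τ 1 ω) ∂P
  refine ⟨ENNReal.ofReal (8 * (A + T * B)), ENNReal.ofReal_ne_top, fun n hn => ?_⟩
  have hA0 : 0 ≤ A := integral_nonneg fun _ => blockEnergy_nonneg _
  have hB0 : 0 ≤ B := integral_nonneg fun _ => blockEnergy_nonneg _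
  have hN : (⌊n * T⌋₊ : ℝ) / n ≤ T :=
    div_le_of_le_mul₀ n.cast_nonneg hT.le (by linarith [Nat.floor_le (by positivity : 0 ≤ n * T)])
  calc _ ≤ ∫⁻ ω, ENNReal.ofReal
          (8 / n * ∑ k ∈ range (⌊n * T⌋₊ + 1), blockEnergy (block X τ k ω)) ∂P :=
        lintegral_mono fun ω => sq_pVar_interp_sub_skeleton_le_blockEnergy (hreg.tau_mono ω)
          (fun u hu => hκ u hu ω) n T
    _ = ENNReal.ofReal (8 / n * (A + ⌊n * T⌋₊ * B)) :=
        lintegral_ofReal_mul_sum_blockEnergy hreg hA (by positivity) _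
    _ ≤ ENNReal.ofReal (8 * (A + T * B)) := by
        refine ENNReal.ofReal_le_ofReal ?_
        calc 8 / n * (A + ⌊n * T⌋₊ * B) = 8 * (A / n + ⌊n * T⌋₊ / n * B) := by ring
          _ ≤ 8 * (A + T * B) := by
            gcongr
            exact div_le_self hA0 (by exact_mod_cast hn)

/-- under Assumption (A), the 2-variation distance between the
interpolated rescaled process `X^{(n)}` and the skeleton process
`V^{(n)}_t = n^{−1/2} X_{τ_{κ(nt)}}` has second moments bounded uniformly in `n`. -/
theorem two_variation_distance_to_skeleton_bounded {Ω : Type*} [MeasurableSpace Ω]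
    (P : Measure Ω) [IsProbabilityMeasure P] {d : ℕ}
    (X : ℕ → Ω → (Fin d → ℝ)) (τ : ℕ → Ω → ℕ)
    (hreg : DelayedRegenerative P X τ) (hA : AssumptionA P X τ)
    (κ : ℝ → Ω → ℕ)
    (hκ : ∀ u : ℝ, 0 ≤ u → ∀ ω, (τ (κ u ω) ω : ℝ) ≤ u ∧ u < τ (κ u ω + 1) ω)
    (T : ℝ) (hT : 0 < T) :
    ∃ C : ℝ≥0∞, C ≠ ∞ ∧ ∀ n : ℕ, 1 ≤ n →
      ∫⁻ ω, (pVar 2 T (fun t =>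
        interp (fun k => X k ω) n t -
          (Real.sqrt n)⁻¹ • X (τ (κ ((n : ℝ) * t) ω) ω) ω)) ^ 2 ∂P ≤ C :=
  two_variation_distance_to_skeleton_bounded_general P X τ hreg hA κ hκ T hT

end
end
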